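/- Extend the previous worklist model by allowing each node n to additionally introduce new claims, each node permitted at most kₙ claims total over the whole execution, each claim carrying a value in a finite-height join-semilattice A of height H updated only by joins, and successors enqueued only when the claim-assessment map at a node changes (a new claim appears or some assessment strictly increases). Then the number of enqueue-triggering events in any execution is at most K + H·K where K = ∑ₙ kₙ, and the algorithm terminates. -/

import Mathlib

/-!
Charge each triggering step to a claim whose value changes at the processed node. Read in
`WithBot A`, with `⊥` for an absent claim, the value of a (node, claim) pair increases
monotonically, so its changes form a strict chain in `WithBot A`, whose chains are one longer
than those of `A`: each pair is charged at most `H + 1` times. Only the at most `K` pairs that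
are active at the end get charged, giving `K * (H + 1)`. After the last triggering step every
step merely erases the processed node from the worklist, which therefore empties.
-/

theorem WithBot.not_strictMono_fin_succ {α : Type*} [Preorder α] {n : ℕ}
    (h : ∀ c : Fin (n + 1) → α, ¬ StrictMono c) (c : Fin (n + 2) → WithBot α) :
    ¬ StrictMono c := by
  intro hc
  have hne : ∀ i : Fin (n + 1), c i.succ ≠ ⊥ := fun i => ne_bot_of_gt (hc (Fin.succ_pos i))
  refine h (fun i => (c i.succ).unbot (hne i)) fun i j hij => ?_
  rw [← WithBot.coe_lt_coe, WithBot.coe_unbot, WithBot.coe_unbot]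
  exact hc (Fin.succ_lt_succ_iff.2 hij)

theorem monotone_withBot_of_forall_some_le {α : Type*} [Preorder α] {x : ℕ → Option α}
    (hx : ∀ t a, x t = some a → ∃ a', x (t + 1) = some a' ∧ a ≤ a') :
    Monotone (β := WithBot α) x := by
  refine monotone_nat_of_le_succ fun t => ?_
  cases hxt : x t with
  | none => exact bot_le
  | some a =>
    obtain ⟨a', hxt', haa'⟩ := hx t a hxt
    rw [hxt']
    exact WithBot.coe_le_coe.2 haa'

section MonotoneSequence

variable {β : Type*} [PartialOrder β] {f : ℕ → β}

theorem Monotone.lt_succ_of_ne (hf : Monotone f) {t : ℕ} (ht : f (t + 1) ≠ f t) :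
    f t < f (t + 1) :=
  lt_of_le_of_ne (hf t.le_succ) ht.symm

/-- A monotone sequence that changes value at `m` times runs through a strict chain of length
`m + 1`. -/
theorem Monotone.card_le_of_ne_succ {n : ℕ} (hβ : ∀ c : Fin (n + 2) → β, ¬ StrictMono c)
    (hf : Monotone f) {F : Finset ℕ} (hF : ∀ t ∈ F, f (t + 1) ≠ f t) : F.card ≤ n := by
  by_contra! hcard
  set e := F.orderEmbOfCardLe hcard
  have hjump : ∀ i, f (e i) < f (e i + 1) := fun i =>
    hf.lt_succ_of_ne (hF _ (F.orderEmbOfCardLe_mem hcard i))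
  refine hβ (Fin.cons (f (e 0)) fun i => f (e i + 1)) (Fin.strictMono_cons.2 ⟨fun j => ?_, ?_⟩)
  · exact (hf (e.monotone (Fin.zero_le j))).trans_lt (hjump j)
  · intro i j hij
    exact (hf (e.strictMono hij)).trans_lt (hjump j)

theorem Monotone.ne_bot_of_ne_succ [OrderBot β] (hf : Monotone f) {t T : ℕ}
    (ht : f (t + 1) ≠ f t) (htT : t < T) : f T ≠ ⊥ :=
  ne_bot_of_gt ((hf.lt_succ_of_ne ht).trans_le (hf htT))

end MonotoneSequence

theorem Finset.card_le_sum_of_ncard_le {V C : Type*} [Fintype V]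
    (D : Finset (V × C)) (k : V → ℕ) (hD : ∀ n, {c | (n, c) ∈ D}.ncard ≤ k n) :
    D.card ≤ ∑ n, k n := by
  classical
  rw [Finset.card_eq_sum_card_fiberwise fun p _ => Finset.mem_univ p.1]
  refine Finset.sum_le_sum fun n _ => le_of_eq_of_le ?_ (hD n)
  rw [← Set.ncard_coe_finset,
    ← Set.ncard_image_of_injective {c | (n, c) ∈ D} (Prod.mk_right_injective n)]
  congr 1
  ext ⟨m, c⟩
  simp +contextual [and_comm, eq_comm]

theorem Set.finite_of_forall_finset_card_le {α : Type*} {X : Set α} {N : ℕ}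
    (h : ∀ s : Finset α, ↑s ⊆ X → s.card ≤ N) : X.Finite := by
  by_contra hX
  obtain ⟨s, hsX, hs⟩ := Set.Infinite.exists_subset_card_eq hX (N + 1)
  have := h s hsX
  omega

theorem Finset.exists_eq_empty_of_card_lt {V : Type*} {W : ℕ → Finset V} {T : ℕ}
    (hW : ∀ t ≥ T, W t ≠ ∅ → (W (t + 1)).card < (W t).card) : ∃ t, W t = ∅ := by
  suffices ∀ m t, T ≤ t → (W t).card = m → ∃ t, W t = ∅ from this _ T le_rfl rfl
  intro m
  induction m using Nat.strong_induction_on with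
  | _ m ih =>
    intro t ht hm
    by_cases hWt : W t = ∅
    · exact ⟨t, hWt⟩
    · exact ih _ (hm ▸ hW t ht hWt) (t + 1) (by omega) rfl

theorem card_triggering_le {V C A : Type*} [Fintype V] [PartialOrder A]
    (H : ℕ) (hH : ∀ c : Fin (H + 2) → A, ¬ StrictMono c) (k : V → ℕ)
    (S : ℕ → V → C → Option A) (node : ℕ → V)
    (hmono : ∀ t n c a, S t n c = some a → ∃ a', S (t + 1) n c = some a' ∧ a ≤ a')
    (hbound : ∀ t n, Set.Finite {c | S t n c ≠ none} ∧ Set.ncard {c | S t n c ≠ none} ≤ k n)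
    (s : Finset ℕ) (hs : ∀ t ∈ s, S (t + 1) (node t) ≠ S t (node t)) :
    s.card ≤ (∑ n, k n) + H * (∑ n, k n) := by
  classical
  have hclaim (n c) : Monotone (β := WithBot A) fun t => S t n c :=
    monotone_withBot_of_forall_some_le (hmono · n c)
  rcases s.eq_empty_or_nonempty with rfl | ⟨t₀, ht₀⟩
  · simp
  have : Nonempty C := ⟨(Function.ne_iff.1 (hs t₀ ht₀)).choose⟩
  choose! w hw using fun t ht => Function.ne_iff.1 (hs t ht)
  set D := s.image fun t => (node t, w t)
  have hfiber : ∀ p ∈ D, (s.filter fun t => (node t, w t) = p).card ≤ H + 1 := by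
    intro p _
    refine (hclaim p.1 p.2).card_le_of_ne_succ (WithBot.not_strictMono_fin_succ hH) ?_
    intro t ht
    obtain ⟨hts, rfl⟩ := Finset.mem_filter.1 ht
    exact hw t hts
  have hD : D.card ≤ ∑ n, k n := by
    refine D.card_le_sum_of_ncard_le k fun n => ?_
    set T := s.sup id + 1
    have hactive : {c | (n, c) ∈ D} ⊆ {c | S T n c ≠ none} := by
      intro c hc
      obtain ⟨t, ht, htc⟩ := Finset.mem_image.1 hc
      obtain ⟨rfl, rfl⟩ := Prod.mk.inj htc
      exact (hclaim _ _).ne_bot_of_ne_succ (hw t ht) (Nat.lt_succ_of_le (s.le_sup (f := id) ht))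
    exact (Set.ncard_le_ncard hactive (hbound T n).1).trans (hbound T n).2
  calc s.card ≤ (H + 1) * D.card := Finset.card_le_mul_card_image s _ hfiber
    _ ≤ (H + 1) * ∑ n, k n := Nat.mul_le_mul_left _ hD
    _ = (∑ n, k n) + H * (∑ n, k n) := by ring

theorem stmt_10_general {V C A : Type*} [Fintype V] [DecidableEq V] [SemilatticeSup A]
    (H : ℕ) (hH : ∀ c : Fin (H + 2) → A, ¬ StrictMono c)
    (k : V → ℕ) (Succ : V → Finset V)
    (S : ℕ → V → C → Option A) (node : ℕ → V) (W : ℕ → Finset V)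
    (hmono : ∀ t n c a, S t n c = some a →
      ∃ a', S (t + 1) n c = some a' ∧ a ≤ a')
    (hbound : ∀ t n, Set.Finite {c | S t n c ≠ none} ∧
      Set.ncard {c | S t n c ≠ none} ≤ k n)
    (hW : ∀ t, W t ≠ ∅ → node t ∈ W t ∧
      ((S (t + 1) (node t) ≠ S t (node t) ∧
          W (t + 1) = (W t).erase (node t) ∪ Succ (node t)) ∨
       (S (t + 1) (node t) = S t (node t) ∧
          W (t + 1) = (W t).erase (node t)))) :
    (∀ s : Finset ℕ, (∀ t ∈ s, S (t + 1) (node t) ≠ S t (node t)) →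
      s.card ≤ (∑ n, k n) + H * (∑ n, k n)) ∧
    (∃ t, W t = ∅) := by
  have hcount := card_triggering_le H hH k S node hmono hbound
  refine ⟨hcount, ?_⟩
  obtain ⟨T, hT⟩ := (Set.finite_of_forall_finset_card_le
    (X := {t | S (t + 1) (node t) ≠ S t (node t)}) hcount).bddAbove
  refine Finset.exists_eq_empty_of_card_lt (T := T + 1) fun t ht hne => ?_
  obtain ⟨hmem, ⟨htrig, -⟩ | ⟨-, hnext⟩⟩ := hW t hne
  · exact absurd (hT htrig) (by omega)
  · rw [hnext]
    exact Finset.card_erase_lt_of_mem hmem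

/-- Worklist model with claim generation: each node `n` carries a finite
partial map from claims `C` to a join-semilattice `A` of finite height `H`,
with at most `k n` claims ever active at `n`, claims never removed, values
updated only by joins, and each step modifying only the processed node.
Successors are enqueued only when the claim-assessment map at the node changes.
Then the number of enqueue-triggering events is at most `K + H * K` where
`K = ∑ n, k n`, and the worklist becomes empty after finitely many
iterations. -/
theorem stmt_10 {V C A : Type*} [Fintype V] [DecidableEq V] [SemilatticeSup A]
    (H : ℕ) (hH : ∀ c : Fin (H + 2) → A, ¬ StrictMono c)
    (k : V → ℕ) (Succ : V → Finset V)
    (S : ℕ → V → C → Option A) (node : ℕ → V) (W : ℕ → Finset V)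
    (hlocal : ∀ t m, m ≠ node t → S (t + 1) m = S t m)
    (hmono : ∀ t n c a, S t n c = some a →
      ∃ a', S (t + 1) n c = some a' ∧ a ≤ a')
    (hbound : ∀ t n, Set.Finite {c | S t n c ≠ none} ∧
      Set.ncard {c | S t n c ≠ none} ≤ k n)
    (hW : ∀ t, W t ≠ ∅ → node t ∈ W t ∧
      ((S (t + 1) (node t) ≠ S t (node t) ∧
          W (t + 1) = (W t).erase (node t) ∪ Succ (node t)) ∨
       (S (t + 1) (node t) = S t (node t) ∧
          W (t + 1) = (W t).erase (node t)))) :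
    (∀ s : Finset ℕ, (∀ t ∈ s, S (t + 1) (node t) ≠ S t (node t)) →
      s.card ≤ (∑ n, k n) + H * (∑ n, k n)) ∧
    (∃ t, W t = ∅) :=
  stmt_10_general H hH k Succ S node W hmono hbound hW
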